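/- arXiv:1402.6595 — 4 statements merged into one kernel-verified Lean document; each statement's English description precedes it below -/
import Mathlib

section
/- Let δ > 0, σ > 1, and t ≥ 0. Then lim_{λ→+∞} λ^σ u_λ(t) = t/(2δ), where u_λ(t) is the solution with constant forcing term 1 and null initial data, defined for all λ large enough that δ²λ^{2σ} > λ. -/
open Filter

/-- `x₁(λ) = δλ^σ + (δ²λ^{2σ} − λ)^{1/2}`, minus the smaller root of
`x² + 2δλ^σ x + λ` in the supercritical regime. -/
noncomputable def x1 (δ σ lam : ℝ) : ℝ :=
  δ * lam ^ σ + (δ ^ 2 * lam ^ (2 * σ) - lam) ^ ((1 : ℝ) / 2)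

/-- `x₂(λ) = δλ^σ − (δ²λ^{2σ} − λ)^{1/2}`, minus the larger root of
`x² + 2δλ^σ x + λ` in the supercritical regime. -/
noncomputable def x2 (δ σ lam : ℝ) : ℝ :=
  δ * lam ^ σ - (δ ^ 2 * lam ^ (2 * σ) - lam) ^ ((1 : ℝ) / 2)

/-- The solution of `u'' + 2δλ^σ u' + λu = 1`, `u(0) = u'(0) = 0`. -/
noncomputable def uSol (δ σ lam t : ℝ) : ℝ :=
  1 / lam + (x2 δ σ lam * Real.exp (-(x1 δ σ lam) * t)
    - x1 δ σ lam * Real.exp (-(x2 δ σ lam) * t)) / (lam * (x1 δ σ lam - x2 δ σ lam))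

/-- The derivative of the above solution. -/
noncomputable def uDer (δ σ lam t : ℝ) : ℝ :=
  (Real.exp (-(x2 δ σ lam) * t) - Real.exp (-(x1 δ σ lam) * t))
    / (x1 δ σ lam - x2 δ σ lam)

/-!
Since `x₁ x₂ = λ`, the solution is a divided difference: `u_λ(t) = (φ(x₂) − φ(x₁)) / (x₁ − x₂)`
with `φ(y) = (1 − e^{−yt}) / y`. Writing `x₁,₂ = λ^σ (δ ± s_λ)` with `s_λ = √(δ² − λ^{1−2σ}) → δ`
gives `λ^σ u_λ(t) = (φ(x₂) − φ(x₁)) / (2 s_λ)`. As `λ → ∞`, `x₂ = λ^{1−σ} / (δ + s_λ) → 0⁺`, so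
`φ(x₂)` tends to the derivative `t` of `y ↦ 1 − e^{−yt}` at `0`, while `x₁ → ∞` and `0 ≤ φ(x₁) ≤ 1/x₁`.
-/

open Real Topology

noncomputable def oneSubExpDiv (t y : ℝ) : ℝ := (1 - exp (-y * t)) / y

theorem tendsto_oneSubExpDiv_nhdsGT_zero (t : ℝ) :
    Tendsto (oneSubExpDiv t) (𝓝[>] 0) (𝓝 t) := by
  have hderiv : HasDerivAt (fun y => -exp (-y * t)) t 0 :=
    ((hasDerivAt_neg 0).mul_const t).exp.neg.congr_deriv (by simp)
  refine hderiv.tendsto_slope_zero_right.congr fun y => ?_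
  simp [oneSubExpDiv, div_eq_inv_mul, neg_add_eq_sub]

theorem tendsto_oneSubExpDiv_atTop {t : ℝ} (ht : 0 ≤ t) :
    Tendsto (oneSubExpDiv t) atTop (𝓝 0) := by
  refine tendsto_of_tendsto_of_tendsto_of_le_of_le' tendsto_const_nhds tendsto_inv_atTop_zero
    ?_ ?_ <;> filter_upwards [eventually_gt_atTop 0] with y hy
  · have : exp (-y * t) ≤ 1 := exp_le_one_iff.2 (by nlinarith)
    exact div_nonneg (by linarith) hy.le
  · rw [oneSubExpDiv, div_eq_mul_inv]
    exact mul_le_of_le_one_left (inv_nonneg.2 hy.le) (by linarith [exp_pos (-y * t)])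

theorem one_div_mul_add_div_eq_oneSubExpDiv_sub {a b : ℝ} (ha : a ≠ 0) (hb : b ≠ 0) (hab : a ≠ b)
    (t : ℝ) :
    1 / (a * b) + (b * exp (-a * t) - a * exp (-b * t)) / (a * b * (a - b)) =
      (oneSubExpDiv t b - oneSubExpDiv t a) / (a - b) := by
  have : a - b ≠ 0 := sub_ne_zero.2 hab
  simp only [oneSubExpDiv]
  field_simp
  ring

theorem tendsto_rpow_atTop_nhds_zero {r : ℝ} (hr : r < 0) :
    Tendsto (fun x : ℝ => x ^ r) atTop (𝓝 0) := by
  simpa using tendsto_rpow_neg_atTop (neg_pos.2 hr)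

noncomputable def discRoot (δ σ lam : ℝ) : ℝ := √(δ ^ 2 - lam ^ (1 - 2 * σ))

section

variable {δ σ lam : ℝ}

theorem rpow_half_eq_mul_discRoot (hlam : 0 < lam) :
    (δ ^ 2 * lam ^ (2 * σ) - lam) ^ ((1 : ℝ) / 2) = lam ^ σ * discRoot δ σ lam := by
  have hsq : lam ^ (2 * σ) = (lam ^ σ) ^ 2 := by
    rw [mul_comm, rpow_mul hlam.le, rpow_two]
  have hfac : δ ^ 2 * lam ^ (2 * σ) - lam = (lam ^ σ) ^ 2 * (δ ^ 2 - lam ^ (1 - 2 * σ)) := by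
    rw [← hsq, mul_sub, ← rpow_add hlam, show 2 * σ + (1 - 2 * σ) = 1 by ring, rpow_one]
    ring
  rw [← sqrt_eq_rpow, hfac, sqrt_mul (by positivity), sqrt_sq (by positivity), discRoot]

theorem x1_eq (hlam : 0 < lam) : x1 δ σ lam = lam ^ σ * (δ + discRoot δ σ lam) := by
  rw [x1, rpow_half_eq_mul_discRoot hlam]; ring

theorem x2_eq (hlam : 0 < lam) : x2 δ σ lam = lam ^ σ * (δ - discRoot δ σ lam) := by
  rw [x2, rpow_half_eq_mul_discRoot hlam]; ring

theorem sub_discRoot_mul_add (h : lam ^ (1 - 2 * σ) ≤ δ ^ 2) :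
    (δ - discRoot δ σ lam) * (δ + discRoot δ σ lam) = lam ^ (1 - 2 * σ) := by
  have hsq : discRoot δ σ lam ^ 2 = δ ^ 2 - lam ^ (1 - 2 * σ) := sq_sqrt (by linarith)
  linear_combination -hsq

theorem x2_eq_rpow_div (hlam : 0 < lam) (hδ : 0 < δ) (h : lam ^ (1 - 2 * σ) ≤ δ ^ 2) :
    x2 δ σ lam = lam ^ (1 - σ) / (δ + discRoot δ σ lam) := by
  have hpos : 0 < δ + discRoot δ σ lam := by unfold discRoot; positivity
  rw [x2_eq hlam, eq_div_iff hpos.ne', mul_assoc, sub_discRoot_mul_add h, ← rpow_add hlam]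
  ring_nf

theorem rpow_mul_uSol_eq (hlam : 0 < lam) (h : lam ^ (1 - 2 * σ) < δ ^ 2) (t : ℝ) :
    lam ^ σ * uSol δ σ lam t =
      (oneSubExpDiv t (x2 δ σ lam) - oneSubExpDiv t (x1 δ σ lam)) / (2 * discRoot δ σ lam) := by
  have hs : 0 < discRoot δ σ lam := sqrt_pos.2 (by linarith)
  have hp : 0 < lam ^ σ := rpow_pos_of_pos hlam σ
  have hprod : x1 δ σ lam * x2 δ σ lam = lam := by
    rw [x1_eq hlam, x2_eq hlam, mul_mul_mul_comm, mul_comm (δ + _), sub_discRoot_mul_add h.le,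
      ← rpow_add hlam, ← rpow_add hlam]
    ring_nf; exact rpow_one lam
  have hsub : x1 δ σ lam - x2 δ σ lam = lam ^ σ * (2 * discRoot δ σ lam) := by
    rw [x1_eq hlam, x2_eq hlam]; ring
  have hx1 : x1 δ σ lam ≠ 0 := left_ne_zero_of_mul (hprod ▸ hlam.ne')
  have hx2 : x2 δ σ lam ≠ 0 := right_ne_zero_of_mul (hprod ▸ hlam.ne')
  have hne : x1 δ σ lam ≠ x2 δ σ lam := sub_ne_zero.1 (hsub ▸ by positivity)
  have hdivided := one_div_mul_add_div_eq_oneSubExpDiv_sub hx1 hx2 hne t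
  rw [hprod] at hdivided
  rw [uSol, hdivided, hsub]
  field_simp

theorem eventually_rpow_lt_sq (hδ : 0 < δ) (hσ : 1 / 2 < σ) :
    ∀ᶠ lam : ℝ in atTop, lam ^ (1 - 2 * σ) < δ ^ 2 :=
  (tendsto_rpow_atTop_nhds_zero (by linarith)).eventually_lt_const (by positivity)

theorem tendsto_discRoot (hδ : 0 ≤ δ) (hσ : 1 / 2 < σ) :
    Tendsto (discRoot δ σ) atTop (𝓝 δ) := by
  have h := ((tendsto_rpow_atTop_nhds_zero (r := 1 - 2 * σ) (by linarith)).const_sub (δ ^ 2)).sqrt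
  rwa [sub_zero, sqrt_sq hδ] at h

theorem tendsto_x1_atTop (hδ : 0 < δ) (hσ : 1 / 2 < σ) :
    Tendsto (x1 δ σ) atTop atTop := by
  have h := (tendsto_rpow_atTop (by linarith : 0 < σ)).atTop_mul_pos (by positivity : 0 < δ + δ)
    ((tendsto_discRoot hδ.le hσ).const_add δ)
  exact h.congr' <| (eventually_gt_atTop 0).mono fun lam hlam => (x1_eq hlam).symm

theorem tendsto_x2_nhdsGT_zero (hδ : 0 < δ) (hσ : 1 < σ) :
    Tendsto (x2 δ σ) atTop (𝓝[>] 0) := by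
  have hs := tendsto_discRoot hδ.le (by linarith : 1 / 2 < σ)
  have heq : (fun lam => lam ^ (1 - σ) / (δ + discRoot δ σ lam)) =ᶠ[atTop] x2 δ σ := by
    filter_upwards [eventually_gt_atTop 0, eventually_rpow_lt_sq hδ (by linarith : 1 / 2 < σ)]
      with lam hlam h
    exact (x2_eq_rpow_div hlam hδ h.le).symm
  refine tendsto_nhdsWithin_iff.2 ⟨?_, ?_⟩
  · have h := (tendsto_rpow_atTop_nhds_zero (r := 1 - σ) (by linarith)).div (hs.const_add δ)
      (by positivity)
    exact (zero_div (δ + δ) ▸ h).congr' heq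
  · filter_upwards [heq, eventually_gt_atTop 0] with lam h hlam
    rw [← h]
    have : 0 ≤ discRoot δ σ lam := sqrt_nonneg _
    exact div_pos (rpow_pos_of_pos hlam _) (by positivity)

end

/-- for `δ > 0`, `σ > 1` and `t ≥ 0`, `λ^σ u_λ(t) → t/(2δ)` as `λ → +∞`. -/
theorem lam_pow_sigma_mul_uSol_tendsto (δ σ t : ℝ) (hδ : 0 < δ) (hσ : 1 < σ)
    (ht : 0 ≤ t) :
    Tendsto (fun lam : ℝ => lam ^ σ * uSol δ σ lam t) atTop (nhds (t / (2 * δ))) := by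
  have hσ' : 1 / 2 < σ := by linarith
  have hquot := (((tendsto_oneSubExpDiv_nhdsGT_zero t).comp (tendsto_x2_nhdsGT_zero hδ hσ)).sub
    ((tendsto_oneSubExpDiv_atTop ht).comp (tendsto_x1_atTop hδ hσ'))).div
    ((tendsto_discRoot hδ.le hσ').const_mul 2) (by positivity)
  rw [sub_zero] at hquot
  refine hquot.congr' ?_
  filter_upwards [eventually_gt_atTop 0, eventually_rpow_lt_sq hδ hσ'] with lam hlam h
  exact (rpow_mul_uSol_eq hlam h t).symm
end

section
/- Let σ = 1/2 and δ > 1, let D := (δ + (δ² − 1)^{1/2})², and let τ_λ := 1/x₂(λ). Then for every λ > 0 one has x₁(λ) = (δ + (δ² − 1)^{1/2})λ^{1/2}, x₂(λ) = (δ − (δ² − 1)^{1/2})λ^{1/2}, λ u_λ(τ_λ) = 1 + (e^{−D} − D e^{−1})/(D − 1), and λ^{1/2} u_λ'(τ_λ) = (e^{−1} − e^{−D})/(2(δ² − 1)^{1/2}); in particular both quantities are independent of λ. -/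
open Filter

open Real

/-!
For `σ = 1/2` the discriminant `δ²λ − λ = (δ² − 1)λ` factors, so both roots scale like `λ^{1/2}`:
`x₁ = (δ + s)λ^{1/2}` and `x₂ = (δ − s)λ^{1/2}` with `s = (δ² − 1)^{1/2}`. Since `(δ + s)(δ − s) = 1`,
their ratio is the constant `D = (δ + s)²`. At `τ = 1/x₂` the exponents are `−x₁τ = −D` and
`−x₂τ = −1`; `λ u(τ)` is homogeneous of degree zero in `(x₁, x₂)`, hence a function of `D` alone,
while `u'(τ)` is a function of `D` divided by `x₁ − x₂ = 2sλ^{1/2}`.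
-/

section RatioOfRoots

variable {δ σ lam : ℝ}

theorem lam_mul_uSol_one_div_x2 (hlam : lam ≠ 0) (hx2 : x2 δ σ lam ≠ 0) :
    lam * uSol δ σ lam (1 / x2 δ σ lam) =
      1 + (exp (-(x1 δ σ lam / x2 δ σ lam)) - x1 δ σ lam / x2 δ σ lam * exp (-1))
        / (x1 δ σ lam / x2 δ σ lam - 1) := by
  rw [uSol, mul_add, mul_one_div_cancel hlam, ← mul_div_assoc, mul_div_mul_left _ _ hlam,
    div_sub_one hx2, div_div_eq_mul_div, neg_mul, neg_mul, mul_one_div, mul_one_div,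
    div_self hx2]
  congr 2
  field_simp

theorem uDer_one_div_x2 (hx2 : x2 δ σ lam ≠ 0) :
    uDer δ σ lam (1 / x2 δ σ lam) =
      (exp (-1) - exp (-(x1 δ σ lam / x2 δ σ lam))) / (x1 δ σ lam - x2 δ σ lam) := by
  rw [uDer]
  congr 3 <;> field_simp

end RatioOfRoots

section HalfExponent

variable {δ lam : ℝ}

theorem add_rpow_half_mul_sub_rpow_half (hδ : 1 ≤ δ ^ 2) :
    (δ + (δ ^ 2 - 1) ^ ((1 : ℝ) / 2)) * (δ - (δ ^ 2 - 1) ^ ((1 : ℝ) / 2)) = 1 := by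
  have hsq : ((δ ^ 2 - 1) ^ ((1 : ℝ) / 2)) ^ 2 = δ ^ 2 - 1 := by
    rw [← sqrt_eq_rpow, sq_sqrt (sub_nonneg.2 hδ)]
  linear_combination -hsq

theorem discriminant_rpow_half (hδ : 1 ≤ δ ^ 2) (hlam : 0 ≤ lam) :
    (δ ^ 2 * lam ^ (2 * (1 / 2 : ℝ)) - lam) ^ ((1 : ℝ) / 2) =
      (δ ^ 2 - 1) ^ ((1 : ℝ) / 2) * lam ^ ((1 : ℝ) / 2) := by
  rw [show (2 : ℝ) * (1 / 2) = 1 by norm_num, rpow_one, ← mul_rpow (sub_nonneg.2 hδ) hlam]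
  ring_nf

theorem x1_half (hδ : 1 ≤ δ ^ 2) (hlam : 0 ≤ lam) :
    x1 δ (1 / 2) lam = (δ + (δ ^ 2 - 1) ^ ((1 : ℝ) / 2)) * lam ^ ((1 : ℝ) / 2) := by
  rw [x1, discriminant_rpow_half hδ hlam]
  ring

theorem x2_half (hδ : 1 ≤ δ ^ 2) (hlam : 0 ≤ lam) :
    x2 δ (1 / 2) lam = (δ - (δ ^ 2 - 1) ^ ((1 : ℝ) / 2)) * lam ^ ((1 : ℝ) / 2) := by
  rw [x2, discriminant_rpow_half hδ hlam]
  ring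

theorem x2_half_ne_zero (hδ : 1 ≤ δ ^ 2) (hlam : 0 < lam) : x2 δ (1 / 2) lam ≠ 0 := by
  rw [x2_half hδ hlam.le]
  exact mul_ne_zero (right_ne_zero_of_mul_eq_one (add_rpow_half_mul_sub_rpow_half hδ))
    (rpow_pos_of_pos hlam _).ne'

theorem x1_div_x2_half (hδ : 1 ≤ δ ^ 2) (hlam : 0 < lam) :
    x1 δ (1 / 2) lam / x2 δ (1 / 2) lam = (δ + (δ ^ 2 - 1) ^ ((1 : ℝ) / 2)) ^ 2 := by
  have hprod := add_rpow_half_mul_sub_rpow_half hδ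
  rw [x1_half hδ hlam.le, x2_half hδ hlam.le, mul_div_mul_right _ _ (rpow_pos_of_pos hlam _).ne',
    div_eq_iff (right_ne_zero_of_mul_eq_one hprod)]
  linear_combination -(δ + (δ ^ 2 - 1) ^ ((1 : ℝ) / 2)) * hprod

theorem x1_sub_x2_half (hδ : 1 ≤ δ ^ 2) (hlam : 0 ≤ lam) :
    x1 δ (1 / 2) lam - x2 δ (1 / 2) lam =
      2 * (δ ^ 2 - 1) ^ ((1 : ℝ) / 2) * lam ^ ((1 : ℝ) / 2) := by
  rw [x1_half hδ hlam, x2_half hδ hlam]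
  ring

end HalfExponent

/-- for `σ = 1/2` and `δ > 1`, with `D := (δ + (δ²−1)^{1/2})²` and
`τ_λ := 1/x₂(λ)`, for every `λ > 0` one has explicit formulas for `x₁(λ)`, `x₂(λ)`,
and `λ u_λ(τ_λ)`, `λ^{1/2} u_λ'(τ_λ)` are constants independent of `λ`. -/
theorem blowup_triple_critical_sigma_half (δ : ℝ) (hδ : 1 < δ) :
    ∀ lam : ℝ, 0 < lam →
      x1 δ (1 / 2) lam = (δ + (δ ^ 2 - 1) ^ ((1 : ℝ) / 2)) * lam ^ ((1 : ℝ) / 2) ∧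
      x2 δ (1 / 2) lam = (δ - (δ ^ 2 - 1) ^ ((1 : ℝ) / 2)) * lam ^ ((1 : ℝ) / 2) ∧
      lam * uSol δ (1 / 2) lam (1 / x2 δ (1 / 2) lam) =
        1 + (Real.exp (-((δ + (δ ^ 2 - 1) ^ ((1 : ℝ) / 2)) ^ 2))
          - (δ + (δ ^ 2 - 1) ^ ((1 : ℝ) / 2)) ^ 2 * Real.exp (-1))
          / ((δ + (δ ^ 2 - 1) ^ ((1 : ℝ) / 2)) ^ 2 - 1) ∧
      lam ^ ((1 : ℝ) / 2) * uDer δ (1 / 2) lam (1 / x2 δ (1 / 2) lam) =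
        (Real.exp (-1) - Real.exp (-((δ + (δ ^ 2 - 1) ^ ((1 : ℝ) / 2)) ^ 2)))
          / (2 * (δ ^ 2 - 1) ^ ((1 : ℝ) / 2)) := by
  intro lam hlam
  have hδ2 : 1 ≤ δ ^ 2 := one_le_pow₀ hδ.le
  have hx2 := x2_half_ne_zero hδ2 hlam
  refine ⟨x1_half hδ2 hlam.le, x2_half hδ2 hlam.le, ?_, ?_⟩
  · rw [lam_mul_uSol_one_div_x2 hlam.ne' hx2, x1_div_x2_half hδ2 hlam]
  · rw [uDer_one_div_x2 hx2, x1_div_x2_half hδ2 hlam, x1_sub_x2_half hδ2 hlam.le,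
      mul_div_assoc', mul_comm (2 * _), mul_div_mul_left _ _ (rpow_pos_of_pos hlam _).ne']
end

section
/- Let (α_n)_{n∈ℕ} be a sequence of positive real numbers with α_n → 0 as n → +∞. Then there exist a strictly increasing sequence (k_n)_{n≥1} of natural numbers and a strictly increasing sequence (T_n)_{n≥0} of nonnegative real numbers with T₀ = 0 such that α_{k_n} ∫_{T_{n−1}}^{T_n} e^{−α_{k_n} x} dx ≥ e^{−1}(1 − e^{−1}) for every n ≥ 1. -/
open Real Filter Topology

/-!
Take `T n = T (n - 1) + 1 / c` with `c = α (k n)`. Then `c * ∫_{T (n-1)}^{T n} e^{-c x} dx`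
equals `e^{-c T (n-1)} (1 - e^{-1})`, so it suffices that `c * T (n - 1) ≤ 1`; as `α → 0`,
an index `k n > k (n - 1)` with this property always exists.
-/

theorem mul_integral_exp_neg_mul {c : ℝ} (hc : c ≠ 0) (a b : ℝ) :
    c * ∫ x in a..b, exp (-c * x) = exp (-c * a) - exp (-c * b) := by
  rw [intervalIntegral.integral_comp_mul_left (fun x => exp x) (neg_ne_zero.2 hc), integral_exp,
    smul_eq_mul, ← mul_assoc, inv_neg, mul_neg, mul_inv_cancel₀ hc]
  ring

theorem mul_integral_exp_neg_mul_add_inv {c : ℝ} (hc : c ≠ 0) (t : ℝ) :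
    c * ∫ x in t..t + c⁻¹, exp (-c * x) = exp (-c * t) * (1 - exp (-1)) := by
  have hexp : -c * (t + c⁻¹) = -c * t + -1 := by field_simp; ring
  rw [mul_integral_exp_neg_mul hc, hexp, exp_add]
  ring

theorem exp_neg_one_mul_le_mul_integral_exp_neg_mul {c t : ℝ} (hc : c ≠ 0) (hct : c * t ≤ 1) :
    exp (-1) * (1 - exp (-1)) ≤ c * ∫ x in t..t + c⁻¹, exp (-c * x) := by
  rw [mul_integral_exp_neg_mul_add_inv hc]
  gcongr
  · exact sub_nonneg.2 (exp_le_one_iff.2 (by norm_num))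
  · linarith

theorem Filter.Tendsto.eventually_mul_le_one {ι : Type*} {l : Filter ι} {α : ι → ℝ}
    (h : Tendsto α l (𝓝 0)) (t : ℝ) : ∀ᶠ j in l, α j * t ≤ 1 := by
  have : Tendsto (fun j => α j * t) l (𝓝 0) := by simpa using h.mul_const t
  exact this.eventually (ge_mem_nhds one_pos)

noncomputable def indexTimeSeq (α : ℕ → ℝ) (next : ℕ → ℝ → ℕ) : ℕ → ℕ × ℝ
  | 0 => (0, 0)
  | n + 1 =>
    let j := next (indexTimeSeq α next n).1 (indexTimeSeq α next n).2
    (j, (indexTimeSeq α next n).2 + (α j)⁻¹)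

namespace indexTimeSeq

variable {α : ℕ → ℝ} {next : ℕ → ℝ → ℕ}

theorem fst_succ (n : ℕ) :
    (indexTimeSeq α next (n + 1)).1 =
      next (indexTimeSeq α next n).1 (indexTimeSeq α next n).2 := rfl

theorem snd_succ (n : ℕ) :
    (indexTimeSeq α next (n + 1)).2 =
      (indexTimeSeq α next n).2 + (α (indexTimeSeq α next (n + 1)).1)⁻¹ := rfl

theorem strictMono_fst (hnext : ∀ k t, k < next k t) :
    StrictMono fun n => (indexTimeSeq α next n).1 :=
  strictMono_nat_of_lt_succ fun n => (fst_succ n).symm ▸ hnext _ _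

theorem strictMono_snd (hα : ∀ j, 0 < α j) :
    StrictMono fun n => (indexTimeSeq α next n).2 :=
  strictMono_nat_of_lt_succ fun n => by
    rw [snd_succ]
    exact lt_add_of_pos_right _ (inv_pos.2 (hα _))

end indexTimeSeq

/-- preliminary integral estimate: given positive `α_n → 0`, there are a
strictly increasing sequence `k_n` of indices and an increasing sequence of times
`T_n` with `T_0 = 0` such that
`α_{k_n} ∫_{T_{n−1}}^{T_n} e^{−α_{k_n}x} dx ≥ e^{−1}(1 − e^{−1})` for all `n ≥ 1`. -/
theorem preliminary_integral_estimate (α : ℕ → ℝ) (hpos : ∀ n, 0 < α n)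
    (hlim : Filter.Tendsto α Filter.atTop (nhds 0)) :
    ∃ (k : ℕ → ℕ) (T : ℕ → ℝ), StrictMono k ∧ StrictMono T ∧ T 0 = 0 ∧
      ∀ n : ℕ, 1 ≤ n →
        Real.exp (-1) * (1 - Real.exp (-1)) ≤
          α (k n) * ∫ x in (T (n - 1))..(T n), Real.exp (-(α (k n)) * x) := by
  choose next hnext_small hnext_gt using fun (k : ℕ) (t : ℝ) =>
    ((hlim.eventually_mul_le_one t).and (eventually_gt_atTop k)).exists
  refine ⟨fun n => (indexTimeSeq α next n).1, fun n => (indexTimeSeq α next n).2,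
    indexTimeSeq.strictMono_fst hnext_gt, indexTimeSeq.strictMono_snd hpos, rfl, fun n hn => ?_⟩
  obtain ⟨m, rfl⟩ := Nat.exists_eq_add_of_le' hn
  dsimp only
  rw [Nat.add_sub_cancel, indexTimeSeq.snd_succ]
  refine exp_neg_one_mul_le_mul_integral_exp_neg_mul (hpos _).ne' ?_
  rw [indexTimeSeq.fst_succ]
  exact hnext_small _ _
end

section
/- Let δ > 0, σ ≥ 0, μ > 0, T > 0, let f : [0,T] → ℝ be continuous, and let u : [0,T] → ℝ be twice continuously differentiable with u(0) = u'(0) = 0 and u''(t) + 2δμ^σ u'(t) + μ u(t) = f(t) for every t ∈ [0,T]. Then for every t ∈ [0,T]: μ^σ u'(t)² + μ^{σ+1} u(t)² + 3δ ∫₀ᵗ μ^{2σ} u'(s)² ds ≤ (1/δ) ∫₀ᵗ f(s)² ds. -/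
open Set MeasureTheory

/-!
Along a solution of `u'' + 2δc u' + k u = f` the energy `E = c u'² + c k u²` satisfies
`E' = 2c u' (u'' + k u) = 2c u' f - 4δc² u'²`, and `2c u' f ≤ δc² u'² + f²/δ`, so
`E' ≤ f²/δ - 3δc² u'²`. Integrating from `0`, where `E` vanishes, gives the estimate with
`c = μ^σ` and `k = μ`.
-/

theorem two_mul_le_mul_sq_add_one_div_mul_sq {δ : ℝ} (hδ : 0 < δ) (x y : ℝ) :
    2 * x * y ≤ δ * x ^ 2 + 1 / δ * y ^ 2 := by
  have hsq : δ * x ^ 2 + 1 / δ * y ^ 2 - 2 * x * y = 1 / δ * (δ * x - y) ^ 2 := by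
    field_simp
    ring
  have : 0 ≤ 1 / δ * (δ * x - y) ^ 2 := by positivity
  linarith

section DampedOscillator

variable {δ c k : ℝ} {u u' u'' f : ℝ → ℝ}

def oscillatorEnergy (c k : ℝ) (u u' : ℝ → ℝ) (t : ℝ) : ℝ :=
  c * u' t ^ 2 + c * k * u t ^ 2

theorem hasDerivWithinAt_oscillatorEnergy {s : Set ℝ} {t : ℝ}
    (hu : HasDerivWithinAt u (u' t) s t) (hu' : HasDerivWithinAt u' (u'' t) s t)
    (heq : u'' t + 2 * δ * c * u' t + k * u t = f t) :
    HasDerivWithinAt (oscillatorEnergy c k u u')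
      (2 * c * u' t * f t - 4 * δ * c ^ 2 * u' t ^ 2) s t := by
  refine (((hu'.pow 2).const_mul c).add ((hu.pow 2).const_mul (c * k))).congr_deriv ?_
  rw [← heq]
  ring

theorem oscillatorEnergy_sub_add_integral_le (hδ : 0 < δ) {a b : ℝ} (hab : a ≤ b)
    (hf : ContinuousOn f (Icc a b))
    (hu : ∀ t ∈ Icc a b, HasDerivWithinAt u (u' t) (Icc a b) t)
    (hu' : ∀ t ∈ Icc a b, HasDerivWithinAt u' (u'' t) (Icc a b) t)
    (heq : ∀ t ∈ Ioo a b, u'' t + 2 * δ * c * u' t + k * u t = f t) :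
    oscillatorEnergy c k u u' b - oscillatorEnergy c k u u' a
        + 3 * δ * ∫ s in a..b, c ^ 2 * u' s ^ 2
      ≤ (1 / δ) * ∫ s in a..b, f s ^ 2 := by
  have hucont : ContinuousOn u (Icc a b) := fun t ht => (hu t ht).continuousWithinAt
  have hu'cont : ContinuousOn u' (Icc a b) := fun t ht => (hu' t ht).continuousWithinAt
  have hEcont : ContinuousOn (oscillatorEnergy c k u u') (Icc a b) :=
    (continuousOn_const.mul (hu'cont.pow 2)).add (continuousOn_const.mul (hucont.pow 2))
  have hderiv : ∀ t ∈ Ioo a b, HasDerivWithinAt (oscillatorEnergy c k u u')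
      (2 * c * u' t * f t - 4 * δ * c ^ 2 * u' t ^ 2) (Ioi t) t := fun t ht =>
    have hIcc : Icc a b ∈ nhds t := Icc_mem_nhds ht.1 ht.2
    hasDerivWithinAt_oscillatorEnergy
      ((hu t (Ioo_subset_Icc_self ht)).hasDerivAt hIcc).hasDerivWithinAt
      ((hu' t (Ioo_subset_Icc_self ht)).hasDerivAt hIcc).hasDerivWithinAt (heq t ht)
  have hbound : ∀ t ∈ Ioo a b, 2 * c * u' t * f t - 4 * δ * c ^ 2 * u' t ^ 2
      ≤ 1 / δ * f t ^ 2 - 3 * δ * (c ^ 2 * u' t ^ 2) := fun t _ => by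
    linear_combination two_mul_le_mul_sq_add_one_div_mul_sq hδ (c * u' t) (f t)
  have hf2 : IntervalIntegrable (fun s => f s ^ 2) volume a b :=
    (hf.pow 2).intervalIntegrable_of_Icc hab
  have hu'2 : IntervalIntegrable (fun s => c ^ 2 * u' s ^ 2) volume a b :=
    (continuousOn_const.mul (hu'cont.pow 2)).intervalIntegrable_of_Icc hab
  have hφint : IntegrableOn
      (fun s => 1 / δ * f s ^ 2 - 3 * δ * (c ^ 2 * u' s ^ 2)) (Icc a b) :=
    ((continuousOn_const.mul (hf.pow 2)).sub
      (continuousOn_const.mul (continuousOn_const.mul (hu'cont.pow 2)))).integrableOn_Icc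
  have key := intervalIntegral.sub_le_integral_of_hasDeriv_right_of_le hab hEcont hderiv
    hφint hbound
  rw [intervalIntegral.integral_sub (hf2.const_mul _) (hu'2.const_mul _),
    intervalIntegral.integral_const_mul, intervalIntegral.integral_const_mul] at key
  linarith

end DampedOscillator

theorem single_mode_energy_estimate_general (δ σ μ T : ℝ) (hδ : 0 < δ)
    (hμ : 0 < μ) (f u u' u'' : ℝ → ℝ)
    (hf : ContinuousOn f (Icc 0 T))
    (hu' : ∀ t ∈ Icc (0 : ℝ) T, HasDerivWithinAt u (u' t) (Icc 0 T) t)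
    (hu'' : ∀ t ∈ Icc (0 : ℝ) T, HasDerivWithinAt u' (u'' t) (Icc 0 T) t)
    (h0 : u 0 = 0) (h0' : u' 0 = 0)
    (heq : ∀ t ∈ Icc (0 : ℝ) T, u'' t + 2 * δ * μ ^ σ * u' t + μ * u t = f t) :
    ∀ t ∈ Icc (0 : ℝ) T,
      μ ^ σ * u' t ^ 2 + μ ^ (σ + 1) * u t ^ 2
          + 3 * δ * ∫ s in (0 : ℝ)..t, μ ^ (2 * σ) * u' s ^ 2
        ≤ (1 / δ) * ∫ s in (0 : ℝ)..t, f s ^ 2 := by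
  intro t ht
  have hsub : Icc 0 t ⊆ Icc 0 T := Icc_subset_Icc_right ht.2
  have key := oscillatorEnergy_sub_add_integral_le (c := μ ^ σ) (k := μ) hδ ht.1
    (hf.mono hsub) (fun s hs => (hu' s (hsub hs)).mono hsub)
    (fun s hs => (hu'' s (hsub hs)).mono hsub)
    (fun s hs => heq s (hsub (Ioo_subset_Icc_self hs)))
  have hpow_add_one : μ ^ (σ + 1) = μ ^ σ * μ := Real.rpow_add_one hμ.ne' σ
  have hpow_two_mul : μ ^ (2 * σ) = (μ ^ σ) ^ 2 := by
    rw [mul_comm]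
    exact_mod_cast Real.rpow_mul_natCast hμ.le σ 2
  simp only [oscillatorEnergy, h0, h0'] at key
  rw [hpow_add_one, hpow_two_mul]
  linarith

/-- single-mode energy estimate: if `u'' + 2δμ^σ u' + μu = f` on `[0,T]`
with `u(0) = u'(0) = 0`, then for every `t ∈ [0,T]`,
`μ^σ u'(t)² + μ^{σ+1} u(t)² + 3δ∫₀ᵗ μ^{2σ} u'(s)² ds ≤ (1/δ)∫₀ᵗ f(s)² ds`. -/
theorem single_mode_energy_estimate (δ σ μ T : ℝ) (hδ : 0 < δ) (hσ : 0 ≤ σ)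
    (hμ : 0 < μ) (hT : 0 < T) (f u u' u'' : ℝ → ℝ)
    (hf : ContinuousOn f (Icc 0 T))
    (hu' : ∀ t ∈ Icc (0 : ℝ) T, HasDerivWithinAt u (u' t) (Icc 0 T) t)
    (hu'' : ∀ t ∈ Icc (0 : ℝ) T, HasDerivWithinAt u' (u'' t) (Icc 0 T) t)
    (hu''cont : ContinuousOn u'' (Icc 0 T))
    (h0 : u 0 = 0) (h0' : u' 0 = 0)
    (heq : ∀ t ∈ Icc (0 : ℝ) T, u'' t + 2 * δ * μ ^ σ * u' t + μ * u t = f t) :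
    ∀ t ∈ Icc (0 : ℝ) T,
      μ ^ σ * u' t ^ 2 + μ ^ (σ + 1) * u t ^ 2
          + 3 * δ * ∫ s in (0 : ℝ)..t, μ ^ (2 * σ) * u' s ^ 2
        ≤ (1 / δ) * ∫ s in (0 : ℝ)..t, f s ^ 2 :=
  single_mode_energy_estimate_general δ σ μ T hδ hμ f u u' u'' hf hu' hu'' h0 h0' heq
end
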